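/- Let α be a classical propositional formula and let v and v' be valuations on B_α that agree on eB_α (i.e. v(B_j) = v'(B_j) for every B_j ∈ eB_α). Then v ⊨ α if and only if v' ⊨ α. (The truth values of the non-essential propositional symbols are irrelevant for determining the truth value of α.) -/

import Mathlib

/-! Changing a single inessential symbol never changes the truth value, and two valuations
agreeing on the essential symbols are connected, within the finitely many symbols of `α`,
by a chain of such single changes. -/

/-- Classical propositional formulas, built from propositional symbols `B_j` (`j : ℕ`)
and `⊤` using `¬` and `→`. -/
inductive PropForm : Type
  | verum : PropForm
  | var : ℕ → PropForm
  | neg : PropForm → PropForm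
  | imp : PropForm → PropForm → PropForm

namespace PropForm

/-- The (finite) set of propositional symbols occurring in a formula. -/
def symbols : PropForm → Finset ℕ
  | verum => ∅
  | var n => {n}
  | neg a => a.symbols
  | imp a b => a.symbols ∪ b.symbols

/-- Truth-table evaluation of a formula under a valuation (satisfaction depends only on
the values taken on the symbols of the formula). -/
def eval (w : ℕ → Bool) : PropForm → Bool
  | verum => true
  | var n => w n
  | neg a => !(a.eval w)
  | imp a b => !(a.eval w) || b.eval w

end PropForm

/-- The propositional symbol `B_j` is essential for `α`: `B_j` occurs in `α` and there is
a valuation `v` such that `v[B_j ↦ 0] ⊨ α` iff `v[B_j ↦ 1] ⊭ α`. -/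
def Essential (α : PropForm) (j : ℕ) : Prop :=
  j ∈ α.symbols ∧ ∃ v : ℕ → Bool,
    (PropForm.eval (Function.update v j false) α = true ↔
      ¬ PropForm.eval (Function.update v j true) α = true)

/-- `eB α` is the set of propositional symbols essential for `α`. -/
def eB (α : PropForm) : Set ℕ :=
  {j | Essential α j}

namespace PropForm

open Function

lemma eval_congr {α : PropForm} {v v' : ℕ → Bool} (h : ∀ j ∈ α.symbols, v j = v' j) :
    α.eval v = α.eval v' := by
  induction α with
  | verum => rfl
  | var n => exact h n (Finset.mem_singleton_self n)
  | neg a ih => simp only [eval, ih h]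
  | imp a b iha ihb =>
      simp only [eval, iha fun j hj => h j (Finset.mem_union_left _ hj),
        ihb fun j hj => h j (Finset.mem_union_right _ hj)]

lemma eval_update_false_eq_update_true_of_not_essential {α : PropForm} {j : ℕ}
    (hj : ¬ Essential α j) (w : ℕ → Bool) :
    α.eval (update w j false) = α.eval (update w j true) := by
  by_cases hmem : j ∈ α.symbols
  · by_contra hne
    refine hj ⟨hmem, w, ?_⟩
    revert hne
    cases α.eval (update w j false) <;> cases α.eval (update w j true) <;> simp
  · exact eval_congr fun k hk => by
      rw [update_of_ne (ne_of_mem_of_not_mem hk hmem), update_of_ne (ne_of_mem_of_not_mem hk hmem)]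

lemma eval_update_of_not_essential {α : PropForm} {j : ℕ} (hj : ¬ Essential α j)
    (v : ℕ → Bool) (b : Bool) : α.eval (update v j b) = α.eval v := by
  have hflip := eval_update_false_eq_update_true_of_not_essential hj v
  conv_rhs => rw [← update_eq_self j v]
  cases b <;> cases v j <;> simp only [hflip]

lemma eval_eq_of_agree_outside_inessential {α : PropForm} (s : Finset ℕ)
    (hs : ∀ j ∈ s, ¬ Essential α j) {v v' : ℕ → Bool}
    (h : ∀ j ∈ α.symbols, j ∉ s → v j = v' j) : α.eval v = α.eval v' := by
  induction s using Finset.induction_on generalizing v with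
  | empty => exact eval_congr fun j hj => h j hj (Finset.notMem_empty j)
  | @insert a t _ ih =>
      rw [← eval_update_of_not_essential (hs a (Finset.mem_insert_self a t)) v (v' a)]
      refine ih (fun j hj => hs j (Finset.mem_insert_of_mem hj)) fun j hj hjt => ?_
      by_cases hja : j = a
      · subst hja
        exact update_self j _ v
      · rw [update_of_ne hja]
        exact h j hj (by simp [hja, hjt])

end PropForm

/-- If two valuations agree on every symbol essential for `α`, then they give `α` the
same truth value: the non-essential symbols are irrelevant. -/
theorem stmt15 (α : PropForm) (v v' : ℕ → Bool)
    (hagree : ∀ j, Essential α j → v j = v' j) :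
    (α.eval v = true ↔ α.eval v' = true) := by
  have hdiff : ∀ j ∈ α.symbols.filter (fun j => v j ≠ v' j), ¬ Essential α j :=
    fun j hj hess => (Finset.mem_filter.mp hj).2 (hagree j hess)
  rw [PropForm.eval_eq_of_agree_outside_inessential _ hdiff fun j hj hjs => by
    simpa [hj] using hjs]
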